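/- arXiv:2204.11012 — 2 statements merged into one kernel-verified Lean document; each statement's English description precedes it below -/
import Mathlib

section
/- If there exists a path p from r to v lying entirely in G' whose length is at most d_G(r,v) and which passes through an edge inserted by the batch update (an edge in E'∖E), then v is affected w.r.t. r, i.e., P_G(r,v) ≠ P_{G'}(r,v). -/
open scoped Classical

variable {V : Type*}

namespace BatchHL

/-- `l` is a walk in `G` from `r` to `v`, given as its (nonempty) list of visited vertices. -/
def IsWalk (G : SimpleGraph V) (r v : V) (l : List V) : Prop :=
  l ≠ [] ∧ l.head? = some r ∧ l.getLast? = some v ∧ l.Chain' G.Adj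

/-- The length (number of edges) of a walk given as a list of vertices. -/
def len (l : List V) : ℕ := l.length - 1

/-- The walk `l` passes through the (undirected) edge `(a, b)`. -/
def Passes (l : List V) (a b : V) : Prop :=
  (a, b) ∈ l.zip l.tail ∨ (b, a) ∈ l.zip l.tail

/-- `P_G(r,v)`: the set of all shortest paths between `r` and `v` in `G`. -/
def SPaths (G : SimpleGraph V) (r v : V) : Set (List V) :=
  {l | IsWalk G r v l ∧ ∀ l', IsWalk G r v l' → l.length ≤ l'.length}

/-- `(a,b)` is an edge deleted by the batch update turning `G` into `G'`. -/
def DeletedEdge (G G' : SimpleGraph V) (a b : V) : Prop := G.Adj a b ∧ ¬ G'.Adj a b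

/-- `(a,b)` is an edge inserted by the batch update turning `G` into `G'`. -/
def InsertedEdge (G G' : SimpleGraph V) (a b : V) : Prop := G'.Adj a b ∧ ¬ G.Adj a b

/-- `(a,b)` is an edge of the batch update `B` turning `G` into `G'`. -/
def UpdatedEdge (G G' : SimpleGraph V) (a b : V) : Prop :=
  InsertedEdge G G' a b ∨ DeletedEdge G G' a b

/-- The walk `l` passes through a deleted edge. -/
def PassesDeleted (G G' : SimpleGraph V) (l : List V) : Prop :=
  ∃ a b, DeletedEdge G G' a b ∧ Passes l a b

/-- The walk `l` passes through an inserted edge. -/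
def PassesInserted (G G' : SimpleGraph V) (l : List V) : Prop :=
  ∃ a b, InsertedEdge G G' a b ∧ Passes l a b

/-- `v` is affected w.r.t. landmark `r` iff the set of shortest paths changes. -/
def Affected (G G' : SimpleGraph V) (r v : V) : Prop := SPaths G r v ≠ SPaths G' r v

/-- A composite path from `r` to `v`: a prefix lying in `G` followed by a suffix lying in `G'`. -/
def IsComposite (G G' : SimpleGraph V) (r v : V) (l : List V) : Prop :=
  ∃ w l₁ l₂, IsWalk G r w l₁ ∧ IsWalk G' w v l₂ ∧ l = l₁ ++ l₂.tail

/-- A significant composite path: a composite path whose `G`-prefix passes through a deleted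
edge and whose `G'`-suffix passes through an inserted edge. -/
def IsSigComposite (G G' : SimpleGraph V) (r v : V) (l : List V) : Prop :=
  ∃ w l₁ l₂, IsWalk G r w l₁ ∧ IsWalk G' w v l₂ ∧ l = l₁ ++ l₂.tail ∧
    PassesDeleted G G' l₁ ∧ PassesInserted G G' l₂

/-- `v` is composite-path affected w.r.t. `r`. -/
def CPAffected (G G' : SimpleGraph V) (r v : V) : Prop :=
  Affected G G' r v ∨ ∃ l, IsSigComposite G G' r v l ∧ (len l : ℕ∞) ≤ G.edist r v

/-- A distance labelling: each label entry `(r, δ) ∈ L v` satisfies `δ = d_G(r,v)`. -/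
def IsLabelling (G : SimpleGraph V) (L : V → Set (V × ℕ∞)) : Prop :=
  ∀ v r δ, (r, δ) ∈ L v → δ = G.edist r v

/-- A 2-hop cover labelling: a distance labelling such that every pair `s, t` has a common
hub `r` lying on a shortest path between `s` and `t`. -/
def Is2HopCover (G : SimpleGraph V) (L : V → Set (V × ℕ∞)) : Prop :=
  IsLabelling G L ∧ ∀ s t : V, ∃ r, (r, G.edist r s) ∈ L s ∧ (r, G.edist r t) ∈ L t ∧
    G.edist s r + G.edist r t = G.edist s t

/-- A highway cover labelling `Γ = (H, L)` over `G` with landmarks `R`.  The highway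
distances `δ_H(r,r_i)` are by definition the graph distances `d_G(r,r_i)`. -/
def IsHighwayCover (G : SimpleGraph V) (R : Set V) (L : V → Set (V × ℕ∞)) : Prop :=
  (∀ v r δ, (r, δ) ∈ L v → r ∈ R ∧ δ = G.edist r v) ∧
  ∀ v, v ∉ R → ∀ r ∈ R,
    G.edist r v = sInf {x | ∃ ri δ, (ri, δ) ∈ L v ∧ x = δ + G.edist r ri}

/-- The landmark length / landmark distance values: `⊤` for "no path", otherwise a pair of a
length and a landmark flag (a `Prop`). -/
abbrev LLen := WithTop (ℕ × Prop)

/-- Lexicographic order on landmark lengths, with flag ordering `True < False`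
(i.e. `x ≤ y` at equal length iff `y`'s flag implies `x`'s flag). -/
def llLe : LLen → LLen → Prop
  | _, none => True
  | none, some _ => False
  | some a, some b => a.1 < b.1 ∨ (a.1 = b.1 ∧ (b.2 → a.2))

/-- Strict lexicographic order on landmark lengths. -/
def llLt (x y : LLen) : Prop := llLe x y ∧ ¬ llLe y x

/-- The extension operator `⊕`: `(d,l) ⊕ w = (d+1, True)` if `w ∈ R∖{r}`, else `(d+1, l)`. -/
def oplus (R : Set V) (r : V) : LLen → V → LLen
  | none, _ => none
  | some a, w => some (a.1 + 1, (w ∈ R ∧ w ≠ r) ∨ a.2)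

/-- The landmark length `lml(l)` of a walk `l` starting at `r`: its length together with the
flag recording whether it passes through a landmark other than `r`. -/
def lmLen (R : Set V) (r : V) (l : List V) : LLen :=
  some (len l, ∃ w ∈ l, w ∈ R ∧ w ≠ r)

/-- The landmark distance `d^L_G(r,v)`: the lexicographically minimal landmark length of a
walk from `r` to `v` (with `True < False` on flags), `⊤` if there is none.  Explicitly, its
length component is the minimal walk length and its flag holds iff some walk of minimal
length passes through a landmark other than `r`. -/
noncomputable def lmDist (G : SimpleGraph V) (R : Set V) (r v : V) : LLen :=
  if ∃ l, IsWalk G r v l then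
    some (sInf {n | ∃ l, IsWalk G r v l ∧ len l = n},
      ∃ l, IsWalk G r v l ∧ len l = sInf {n | ∃ l', IsWalk G r v l' ∧ len l' = n} ∧
        ∃ w ∈ l, w ∈ R ∧ w ≠ r)
  else ⊤

/-- Order on extended landmark lengths `(landmark length, deletion flag)`, lexicographic with
`True < False` on the deletion flag. -/
def ellLe (x y : LLen × Prop) : Prop := llLt x.1 y.1 ∨ (x.1 = y.1 ∧ (y.2 → x.2))

/-- Strict order on extended landmark lengths. -/
def ellLt (x y : LLen × Prop) : Prop := ellLe x y ∧ ¬ ellLe y x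

/-- `β(r,v) = (d^L_G(r,v), True)`. -/
noncomputable def beta (G : SimpleGraph V) (R : Set V) (r v : V) : LLen × Prop :=
  (lmDist G R r v, True)

/-- The distance bound `d_bou(u, S)` of `u` w.r.t. `S` in `G'`. -/
noncomputable def dbou (G' : SimpleGraph V) (r : V) (S : Set V) (u : V) : ℕ∞ :=
  ⨅ (w : V) (_ : G'.Adj u w ∧ w ∉ S), (G'.edist r w + 1)

/-- The set `{ d^L_{G'}(r,w) ⊕ v | w ∈ N_{G'}(v) ∖ S }`, whose lexicographic minimum is the
landmark distance bound `d^L_bou(v,S)`. -/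
noncomputable def lmBouSet (G' : SimpleGraph V) (R : Set V) (r v : V) (S : Set V) :
    Set LLen :=
  {x | ∃ w, G'.Adj v w ∧ w ∉ S ∧ x = oplus R r (lmDist G' R r w) v}

/-- The subgraph `G[V ∖ R]` obtained by removing all landmarks (landmarks become isolated). -/
def removeLandmarks (G : SimpleGraph V) (R : Set V) : SimpleGraph V where
  Adj u w := G.Adj u w ∧ u ∉ R ∧ w ∉ R
  symm := ⟨fun u w ⟨h, hu, hw⟩ => ⟨h.symm, hw, hu⟩⟩
  loopless := ⟨fun u ⟨h, _, _⟩ => G.loopless.irrefl u h⟩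

end BatchHL

/-!
If `P_G(r,v) = P_{G'}(r,v)`, a shortest `r`-`v` path `q` of `G'` is also a walk in `G`, so
`len p ≤ d_G(r,v) ≤ len q`. Hence `p` has minimal length in `G'`, so it lies in
`P_{G'}(r,v) = P_G(r,v)` and is a walk in `G`; but `p` uses an edge missing from `G`.
-/

theorem List.rel_of_mem_zip_tail {α : Type*} {R : α → α → Prop} {l : List α} (h : l.IsChain R)
    {a b : α} (hm : (a, b) ∈ l.zip l.tail) : R a b := by
  induction l with
  | nil => simp at hm
  | cons x t ih =>
    cases t with
    | nil => simp at hm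
    | cons y s =>
      simp only [List.tail_cons, List.zip_cons_cons, List.mem_cons, Prod.mk.injEq] at hm
      rcases hm with ⟨rfl, rfl⟩ | hm
      · exact h.rel
      · exact ih h.of_cons hm

namespace BatchHL

section

variable {G G' : SimpleGraph V} {r v : V} {l l₀ : List V}

theorem IsWalk.edist_le_len (h : IsWalk G r v l) : G.edist r v ≤ len l := by
  obtain ⟨hne, hhead, hlast, hchain : l.IsChain G.Adj⟩ := h
  rw [List.head?_eq_some_head hne, Option.some_inj] at hhead
  rw [List.getLast?_eq_some_getLast hne, Option.some_inj] at hlast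
  subst hhead hlast
  exact (G.edist_le (SimpleGraph.Walk.ofSupport l hne hchain)).trans_eq
    (by rw [SimpleGraph.Walk.length_ofSupport]; rfl)

theorem IsWalk.adj_of_passes (h : IsWalk G r v l) {a b : V} (hp : Passes l a b) : G.Adj a b :=
  hp.elim (List.rel_of_mem_zip_tail h.2.2.2) fun hba ↦ (List.rel_of_mem_zip_tail h.2.2.2 hba).symm

theorem IsWalk.not_passesInserted (h : IsWalk G r v l) : ¬ PassesInserted G G' l :=
  fun ⟨_, _, ⟨_, hnadj⟩, hp⟩ ↦ hnadj (h.adj_of_passes hp)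

theorem IsWalk.exists_mem_sPaths (h : IsWalk G r v l) : ∃ l₀, l₀ ∈ SPaths G r v := by
  obtain ⟨l₀, hl₀, hmin⟩ :=
    (measure List.length).wf.has_min {l | IsWalk G r v l} ⟨l, h⟩
  exact ⟨l₀, hl₀, fun l' hl' ↦ not_lt.1 (hmin l' hl')⟩

theorem mem_sPaths_of_len_le (h₀ : l₀ ∈ SPaths G r v) (h : IsWalk G r v l)
    (hle : len l ≤ len l₀) : l ∈ SPaths G r v := by
  have hpos₀ : 0 < l₀.length := List.length_pos_iff.mpr h₀.1.1
  refine ⟨h, fun l' hl' ↦ ?_⟩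
  have hmin : l₀.length ≤ l'.length := h₀.2 l' hl'
  unfold len at hle
  omega

end

/-- If there is a path `p` from `r` to `v` lying entirely in `G'`, of length
at most `d_G(r,v)`, passing through an inserted edge, then `v` is affected w.r.t. `r`. -/
theorem inserted_path_affects (G G' : SimpleGraph V) (r v : V) (l : List V)
    (hl : IsWalk G' r v l) (hlen : (len l : ℕ∞) ≤ G.edist r v)
    (hins : PassesInserted G G' l) :
    Affected G G' r v := by
  intro heq
  obtain ⟨l₀, hl₀⟩ := hl.exists_mem_sPaths
  have hl₀G : IsWalk G r v l₀ := (heq ▸ hl₀ : l₀ ∈ SPaths G r v).1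
  have hle : len l ≤ len l₀ := by exact_mod_cast hlen.trans hl₀G.edist_le_len
  have hlG : l ∈ SPaths G r v := heq ▸ mem_sPaths_of_len_le hl₀ hl hle
  exact hlG.1.not_passesInserted hins

end BatchHL
end

section
/- In the minimal highway cover labelling of a connected graph G with landmark set R, the label of any vertex v ∈ V∖R contains the entry (r, d_G(r,v)) for a landmark r if and only if no shortest path between r and v passes through a landmark other than r. Consequently |L(v)| ≤ |R| for every vertex v. -/
open scoped Classical

variable {V : Type*}

namespace BatchHL

/-!
A landmark `r'` on a shortest `r`–`v` path that is closest to `v` has no other landmark on a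
shortest `r'`–`v` path. Hence keeping in `L(v)` only the entries `(r', d(r', v))` of landmarks
`r'` with no other landmark on a shortest `r'`–`v` path already gives a highway cover
labelling, which the minimal one is contained in. Conversely, the entry `(rᵢ, d(rᵢ, v))`
realising `d(r, v)` in the highway cover condition puts `rᵢ` on a shortest `r`–`v` path, so
`rᵢ = r` when no other landmark lies on one.
-/

open SimpleGraph

variable {G : SimpleGraph V}

lemma isWalk_iff_exists_walk {r v : V} {l : List V} :
    IsWalk G r v l ↔ ∃ p : G.Walk r v, p.support = l := by
  constructor
  · rintro ⟨hne, hhead, hlast, hchain⟩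
    have hr : l.head hne = r := by rwa [List.head?_eq_some_head hne, Option.some_inj] at hhead
    have hv : l.getLast hne = v := by
      rwa [List.getLast?_eq_some_getLast hne, Option.some_inj] at hlast
    refine ⟨(Walk.ofSupport l hne hchain).copy hr hv, ?_⟩
    rw [Walk.support_copy]
    exact Walk.support_ofSupport _ _
  · rintro ⟨p, rfl⟩
    exact ⟨p.support_ne_nil, by rw [List.head?_eq_some_head p.support_ne_nil, p.head_support],
      by rw [List.getLast?_eq_some_getLast p.support_ne_nil, p.getLast_support],
      p.isChain_adj_support⟩

lemma len_support {r v : V} (p : G.Walk r v) : len p.support = p.length := by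
  simp [len, Walk.length_support]

variable (G) in
def OnShortestPath (a w b : V) : Prop := G.edist a w + G.edist w b = G.edist a b

lemma OnShortestPath.trans {a w w' b : V} (h : OnShortestPath G a w b)
    (h' : OnShortestPath G w w' b) : OnShortestPath G a w' b := by
  refine le_antisymm ?_ SimpleGraph.edist_triangle
  calc G.edist a w' + G.edist w' b
      ≤ G.edist a w + G.edist w w' + G.edist w' b := by gcongr; exact SimpleGraph.edist_triangle
    _ = G.edist a b := by rw [add_assoc, h', h]

lemma onShortestPath_iff_exists_walk {a w b : V} (hab : G.Reachable a b) :
    OnShortestPath G a w b ↔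
      ∃ p : G.Walk a b, (p.length : ℕ∞) = G.edist a b ∧ w ∈ p.support := by
  constructor
  · intro h
    have hfin : G.edist a w + G.edist w b ≠ ⊤ := h ▸ edist_ne_top_iff_reachable.2 hab
    obtain ⟨p₁, hp₁⟩ := (reachable_of_edist_ne_top
      (ne_top_of_le_ne_top hfin le_self_add)).exists_walk_length_eq_edist
    obtain ⟨p₂, hp₂⟩ := (reachable_of_edist_ne_top
      (ne_top_of_le_ne_top hfin le_add_self)).exists_walk_length_eq_edist
    refine ⟨p₁.append p₂, ?_, p₁.support_subset_support_append_left p₂ p₁.end_mem_support⟩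
    rw [Walk.length_append, Nat.cast_add, hp₁, hp₂, h]
  · rintro ⟨p, hp, hw⟩
    refine le_antisymm ?_ SimpleGraph.edist_triangle
    calc G.edist a w + G.edist w b
        ≤ (p.takeUntil w hw).length + (p.dropUntil w hw).length :=
          add_le_add (edist_le _) (edist_le _)
      _ = G.edist a b := by
          rw [← hp, ← Nat.cast_add, ← Walk.length_append, p.take_spec hw]

lemma OnShortestPath.edist_right_le {a w b : V} (h : OnShortestPath G a w b) :
    G.edist w b ≤ G.edist a b :=
  h ▸ le_add_self

lemma OnShortestPath.eq_of_edist_le {a w b : V} (h : OnShortestPath G a w b)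
    (hwb : G.edist w b ≠ ⊤) (hle : G.edist a b ≤ G.edist w b) : w = a := by
  have : G.edist a w + G.edist w b ≤ 0 + G.edist w b := by rwa [h, zero_add]
  exact (edist_eq_zero_iff.1 <| nonpos_iff_eq_zero.1 <|
    (WithTop.add_le_add_iff_right hwb).1 this).symm

lemma exists_mem_onShortestPath_closest {r v : V} {R : Set V} (hrv : G.Reachable r v)
    (hr : r ∈ R) :
    ∃ r' ∈ R, OnShortestPath G r r' v ∧ ∀ w ∈ R, OnShortestPath G r' w v → w = r' := by
  -- Take `r'` closest to `v`: a landmark `w` on a shortest `r'`–`v` path also lies on a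
  -- shortest `r`–`v` path, and is strictly closer to `v` unless `w = r'`.
  obtain ⟨r', ⟨hr'R, hr'⟩, hmin⟩ := (InvImage.wf (G.edist · v) wellFounded_lt).has_min
    {w | w ∈ R ∧ OnShortestPath G r w v} ⟨r, hr, by simp [OnShortestPath]⟩
  refine ⟨r', hr'R, hr', fun w hwR hw => hw.eq_of_edist_le ?_ ?_⟩
  · exact ne_top_of_le_ne_top (edist_ne_top_iff_reachable.2 hrv)
      (hw.edist_right_le.trans hr'.edist_right_le)
  · exact not_lt.1 (hmin w ⟨hwR, hr'.trans hw⟩)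

lemma exists_shortest_isWalk_mem_iff {r v : V} (hrv : G.Reachable r v) (P : V → Prop) :
    (∃ l, IsWalk G r v l ∧ (len l : ℕ∞) = G.edist r v ∧ ∃ w ∈ l, P w) ↔
      ∃ w, P w ∧ OnShortestPath G r w v := by
  constructor
  · rintro ⟨l, hl, hlen, w, hwl, hw⟩
    obtain ⟨p, rfl⟩ := isWalk_iff_exists_walk.1 hl
    exact ⟨w, hw, (onShortestPath_iff_exists_walk hrv).2 ⟨p, len_support p ▸ hlen, hwl⟩⟩
  · rintro ⟨w, hw, hon⟩
    obtain ⟨p, hp, hwp⟩ := (onShortestPath_iff_exists_walk hrv).1 hon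
    exact ⟨p.support, isWalk_iff_exists_walk.2 ⟨p, rfl⟩, by rwa [len_support], w, hwp, hw⟩

variable (G) in
def minimalLabel (R : Set V) (v : V) : Set (V × ℕ∞) :=
  (fun r => (r, G.edist r v)) '' {r ∈ R | ∀ w ∈ R, OnShortestPath G r w v → w = r}

lemma mem_minimalLabel_iff {R : Set V} {v r : V} {δ : ℕ∞} :
    (r, δ) ∈ minimalLabel G R v ↔
      (r ∈ R ∧ ∀ w ∈ R, OnShortestPath G r w v → w = r) ∧ δ = G.edist r v := by
  simp only [minimalLabel, Set.mem_image, Set.mem_ofPred_eq, Prod.mk.injEq]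
  constructor
  · rintro ⟨r, hr, rfl, rfl⟩
    exact ⟨hr, rfl⟩
  · rintro ⟨hr, rfl⟩
    exact ⟨r, hr, rfl, rfl⟩

lemma isHighwayCover_minimalLabel (hG : G.Connected) (R : Set V) :
    IsHighwayCover G R (minimalLabel G R) := by
  refine ⟨fun v r δ h => ?_, fun v _ r hr => le_antisymm (le_sInf ?_) ?_⟩
  · obtain ⟨⟨hr, -⟩, rfl⟩ := mem_minimalLabel_iff.1 h
    exact ⟨hr, rfl⟩
  · rintro _ ⟨ri, δ, h, rfl⟩
    obtain ⟨-, rfl⟩ := mem_minimalLabel_iff.1 h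
    rw [add_comm]
    exact SimpleGraph.edist_triangle
  · obtain ⟨r', hr'R, hr', hclosest⟩ := exists_mem_onShortestPath_closest (hG r v) hr
    exact sInf_le ⟨r', _, mem_minimalLabel_iff.2 ⟨⟨hr'R, hclosest⟩, rfl⟩, by rw [add_comm, hr']⟩

lemma IsHighwayCover.exists_mem_onShortestPath {R : Set V} {L : V → Set (V × ℕ∞)}
    (hL : IsHighwayCover G R L) {v r : V} (hv : v ∉ R) (hr : r ∈ R) (hrv : G.Reachable r v) :
    ∃ ri, (ri, G.edist ri v) ∈ L v ∧ OnShortestPath G r ri v := by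
  set S := {x | ∃ ri δ, (ri, δ) ∈ L v ∧ x = δ + G.edist r ri}
  have hS : G.edist r v = sInf S := hL.2 v hv r hr
  have hne : S.Nonempty := Set.nonempty_iff_ne_empty.2 fun h =>
    edist_ne_top_iff_reachable.2 hrv (by rw [hS, h, sInf_empty])
  obtain ⟨ri, δ, hri, hx⟩ := csInf_mem hne
  obtain ⟨-, rfl⟩ := hL.1 v ri δ hri
  exact ⟨ri, hri, by rw [OnShortestPath, hS, hx, add_comm]⟩

lemma IsHighwayCover.ncard_le {R : Set V} {L : V → Set (V × ℕ∞)} (hL : IsHighwayCover G R L)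
    (hR : R.Finite) (v : V) : (L v).ncard ≤ R.ncard := by
  have hsub : L v ⊆ (fun r => (r, G.edist r v)) '' R := by
    rintro ⟨r, δ⟩ h
    obtain ⟨hr, rfl⟩ := hL.1 v r δ h
    exact ⟨r, hr, rfl⟩
  exact (Set.ncard_le_ncard hsub (hR.image _)).trans (Set.ncard_image_le hR)

/-- In the minimal highway cover labelling of a connected graph `G` with
landmark set `R`, the label of a vertex `v ∈ V∖R` contains `(r, d_G(r,v))` iff no shortest
path between `r` and `v` passes through a landmark other than `r`.  Consequently
`|L(v)| ≤ |R|` for every vertex `v`. -/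
theorem minimal_label_membership (G : SimpleGraph V) (hG : G.Connected)
    (R : Set V) (hR : R.Finite) (L : V → Set (V × ℕ∞))
    (hL : IsHighwayCover G R L)
    (hmin : ∀ L', IsHighwayCover G R L' → ∀ u, L u ⊆ L' u) :
    (∀ v, v ∉ R → ∀ r ∈ R,
      ((r, G.edist r v) ∈ L v ↔
        ¬ ∃ l, IsWalk G r v l ∧ (len l : ℕ∞) = G.edist r v ∧ ∃ w ∈ l, w ∈ R ∧ w ≠ r)) ∧
    ∀ v, (L v).ncard ≤ R.ncard := by
  have hsub : ∀ u, L u ⊆ minimalLabel G R u := hmin _ (isHighwayCover_minimalLabel hG R)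
  refine ⟨fun v hv r hr => ?_, hL.ncard_le hR⟩
  rw [exists_shortest_isWalk_mem_iff (hG r v)]
  constructor
  · rintro hmem ⟨w, ⟨hwR, hwr⟩, hw⟩
    exact hwr ((mem_minimalLabel_iff.1 (hsub v hmem)).1.2 w hwR hw)
  · intro hno
    obtain ⟨ri, hri, hon⟩ := hL.exists_mem_onShortestPath hv hr (hG r v)
    obtain rfl : ri = r := by_contra fun hne => hno ⟨ri, ⟨(hL.1 _ _ _ hri).1, hne⟩, hon⟩
    exact hri

end BatchHL
end
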